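/- arXiv:0905.2900 — 3 statements merged into one kernel-verified Lean document; each statement's English description precedes it below -/
import Mathlib

section
/- Let dm be a finite nonnegative Borel measure on [0,ℓ]. For j ≥ 1, define ψ_j(ℓ) = ∫ dm(s_1)...∫ dm(s_j) 𝟙(0 < s_j < s_{j-1} < ... < s_1 < ℓ) (ℓ-s_1)(s_1-s_2)···(s_{j-1}-s_j)s_j. Then ψ_j(ℓ) ≤ (ℓ/j!)·(∫_{(0,ℓ)} (ℓ-s) dm(s))^j. -/
open MeasureTheory Function
open scoped Nat

/-!
Bound each gap `s i - s (i+1)` by `ℓ - s (i+1)` and the last factor `s k` by `ℓ`: on the ordered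
simplex the integrand is then at most `ℓ * ∏ i, (ℓ - s i)`, a symmetric function of `s`. The `j!`
permuted copies of the simplex are disjoint and carry the same integral of a symmetric function,
so the integral over the simplex is at most `1 / j!` times the integral over the whole product,
which factorizes as `(∫_{(0,ℓ)} (ℓ - s) dμ) ^ j`.
-/

section Symmetrization

variable {α : Type*} {n : ℕ}

theorem Equiv.Perm.eq_of_strictAnti_comp [LinearOrder α] {s : Fin n → α}
    {σ τ : Equiv.Perm (Fin n)} (hσ : StrictAnti (s ∘ σ)) (hτ : StrictAnti (s ∘ τ)) : σ = τ := by
  have hs : Injective s := by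
    simpa [comp_assoc] using hσ.injective.comp σ.symm.injective
  have hστ : s ∘ σ = s ∘ τ := Tuple.unique_antitone hσ.antitone hτ.antitone
  exact Equiv.ext fun i => hs (congrFun hστ i)

theorem pairwise_disjoint_strictAnti_comp_perm [LinearOrder α] :
    Pairwise (Disjoint on fun σ : Equiv.Perm (Fin n) => {s : Fin n → α | StrictAnti (s ∘ σ)}) :=
  fun _ _ hστ => Set.disjoint_left.2 fun _ hσ hτ => hστ (Equiv.Perm.eq_of_strictAnti_comp hσ hτ)

variable [LinearOrder α] [MeasurableSpace α]

theorem measurableSet_strictAnti [TopologicalSpace α] [OrderClosedTopology α]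
    [SecondCountableTopology α] [OpensMeasurableSpace α] :
    MeasurableSet {s : Fin n → α | StrictAnti s} := by
  simp only [StrictAnti, Set.ofPred_forall]
  exact .iInter fun i => .iInter fun j => .iInter fun _ =>
    measurableSet_lt (measurable_pi_apply j) (measurable_pi_apply i)

variable (μ : Measure α) [SigmaFinite μ]

theorem setIntegral_strictAnti_comp_perm {F : (Fin n → α) → ℝ} {σ : Equiv.Perm (Fin n)}
    (hF : ∀ s, F (s ∘ σ) = F s) :
    ∫ s in {s | StrictAnti (s ∘ σ)}, F s ∂Measure.pi (fun _ => μ) =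
      ∫ s in {s | StrictAnti s}, F s ∂Measure.pi (fun _ => μ) := by
  let e : (Fin n → α) ≃ᵐ (Fin n → α) := MeasurableEquiv.arrowCongr' σ.symm (.refl α)
  have he : ∀ s, e s = s ∘ σ := fun _ => rfl
  have hmp : MeasurePreserving e (Measure.pi fun _ => μ) (Measure.pi fun _ => μ) :=
    measurePreserving_arrowCongr' _ _ σ.symm (.refl α) fun _ => .id μ
  simpa [he, hF] using hmp.setIntegral_preimage_emb e.measurableEmbedding F {s | StrictAnti s}

variable [TopologicalSpace α] [OrderClosedTopology α] [SecondCountableTopology α]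
  [OpensMeasurableSpace α]

theorem factorial_mul_setIntegral_strictAnti_le {F : (Fin n → α) → ℝ}
    (hF_symm : ∀ (σ : Equiv.Perm (Fin n)) s, F (s ∘ σ) = F s) (hF_nonneg : 0 ≤ F)
    (hF_int : Integrable F (Measure.pi fun _ => μ)) :
    n ! * ∫ s in {s | StrictAnti s}, F s ∂Measure.pi (fun _ => μ) ≤
      ∫ s, F s ∂Measure.pi (fun _ => μ) := by
  have hmeas (σ : Equiv.Perm (Fin n)) : MeasurableSet {s : Fin n → α | StrictAnti (s ∘ σ)} :=
    measurableSet_strictAnti.preimage (by fun_prop)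
  calc n ! * ∫ s in {s | StrictAnti s}, F s ∂Measure.pi (fun _ => μ)
      = ∑ σ : Equiv.Perm (Fin n),
          ∫ s in {s | StrictAnti (s ∘ σ)}, F s ∂Measure.pi (fun _ => μ) := by
        simp [setIntegral_strictAnti_comp_perm μ (hF_symm _), Fintype.card_perm]
    _ = ∫ s in ⋃ σ : Equiv.Perm (Fin n), {s | StrictAnti (s ∘ σ)}, F s ∂Measure.pi (fun _ => μ) :=
        (integral_iUnion_fintype hmeas (pairwise_disjoint_strictAnti_comp_perm (α := α))
          fun _ => hF_int.integrableOn).symm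
    _ ≤ ∫ s, F s ∂Measure.pi (fun _ => μ) := setIntegral_le_integral hF_int (.of_forall hF_nonneg)

theorem factorial_mul_setIntegral_strictAnti_prod_le {g : α → ℝ} (hg_nonneg : 0 ≤ g)
    (hg_int : Integrable g μ) :
    n ! * ∫ s in {s : Fin n → α | StrictAnti s}, ∏ i, g (s i) ∂Measure.pi (fun _ => μ) ≤
      (∫ x, g x ∂μ) ^ n := by
  have := factorial_mul_setIntegral_strictAnti_le μ (F := fun s : Fin n → α => ∏ i, g (s i))
    (fun σ s => Equiv.prod_comp σ fun i => g (s i))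
    (fun _ => Finset.prod_nonneg fun _ _ => hg_nonneg _)
    (Integrable.fintype_prod fun _ => hg_int)
  rwa [integral_fintype_prod_eq_pow, Fintype.card_fin] at this

end Symmetrization

section Gaps

variable {R : Type*} [CommRing R] [LinearOrder R] [IsStrictOrderedRing R] {k : ℕ}
  {s : Fin (k + 1) → R} {ℓ : R}

theorem Antitone.prod_gaps_nonneg (hs : Antitone s) (h0 : 0 ≤ s (Fin.last k))
    (hℓ : s 0 ≤ ℓ) : 0 ≤ (ℓ - s 0) * (∏ i : Fin k, (s i.castSucc - s i.succ)) * s (Fin.last k) :=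
  mul_nonneg (mul_nonneg (sub_nonneg.2 hℓ) (Finset.prod_nonneg fun i _ =>
    sub_nonneg.2 (hs i.castSucc_le_succ))) h0

theorem Antitone.prod_gaps_le (hs : Antitone s) (h0 : 0 ≤ s (Fin.last k)) (hℓ : s 0 ≤ ℓ) :
    (ℓ - s 0) * (∏ i : Fin k, (s i.castSucc - s i.succ)) * s (Fin.last k) ≤
      ℓ * ∏ i, (ℓ - s i) := by
  have hle (i : Fin (k + 1)) : s i ≤ ℓ := (hs (Fin.zero_le i)).trans hℓ
  have hgaps : ∏ i : Fin k, (s i.castSucc - s i.succ) ≤ ∏ i : Fin k, (ℓ - s i.succ) :=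
    Finset.prod_le_prod (fun i _ => sub_nonneg.2 (hs i.castSucc_le_succ))
      fun i _ => sub_le_sub_right (hle _) _
  calc (ℓ - s 0) * (∏ i : Fin k, (s i.castSucc - s i.succ)) * s (Fin.last k)
      ≤ (ℓ - s 0) * (∏ i : Fin k, (ℓ - s i.succ)) * ℓ := by
        have hℓ0 : 0 ≤ ℓ - s 0 := sub_nonneg.2 hℓ
        exact mul_le_mul (mul_le_mul_of_nonneg_left hgaps hℓ0) (hle _) h0
          (mul_nonneg hℓ0 (Finset.prod_nonneg fun i _ => sub_nonneg.2 (hle _)))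
    _ = ℓ * ∏ i, (ℓ - s i) := by rw [Fin.prod_univ_succ]; ring

end Gaps

theorem indicator_prod_gaps_le {ℓ : ℝ} (hℓ : 0 ≤ ℓ) {k : ℕ} (s : Fin (k + 1) → ℝ) :
    {s : Fin (k + 1) → ℝ | StrictAnti s ∧ 0 < s (Fin.last k) ∧ s 0 < ℓ}.indicator
        (fun s => (ℓ - s 0) * (∏ i : Fin k, (s i.castSucc - s i.succ)) * s (Fin.last k)) s ≤
      ℓ * {s : Fin (k + 1) → ℝ | StrictAnti s}.indicator
        (fun s => ∏ i, (Set.Ioo 0 ℓ).indicator (fun t => ℓ - t) (s i)) s := by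
  set h : ℝ → ℝ := (Set.Ioo 0 ℓ).indicator fun t => ℓ - t with hh
  have hfactors_nonneg : 0 ≤ ∏ i, h (s i) :=
    Finset.prod_nonneg fun _ _ => Set.indicator_nonneg (fun _ ht => sub_nonneg.2 ht.2.le) _
  simp only [Set.indicator_apply, Set.mem_ofPred_eq]
  split_ifs with hA hanti
  · obtain ⟨hanti, h0, hlt⟩ := hA
    have hmem (i : Fin (k + 1)) : s i ∈ Set.Ioo 0 ℓ :=
      ⟨h0.trans_le (hanti.antitone (Fin.le_last i)),
        (hanti.antitone (Fin.zero_le i)).trans_lt hlt⟩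
    simpa only [hh, Set.indicator_of_mem (hmem _)] using hanti.antitone.prod_gaps_le h0.le hlt.le
  · exact absurd hA.1 hanti
  · exact mul_nonneg hℓ hfactors_nonneg
  · simp

theorem stmt_5_general (ℓ : ℝ) (hℓ : 0 < ℓ) (μ : Measure ℝ) [IsFiniteMeasure μ] (k : ℕ) :
    (∫ s : Fin (k + 1) → ℝ,
        Set.indicator
          {s : Fin (k + 1) → ℝ | StrictAnti s ∧ 0 < s (Fin.last k) ∧ s 0 < ℓ}
          (fun s => (ℓ - s 0) * (∏ i : Fin k, (s i.castSucc - s i.succ)) * s (Fin.last k)) s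
        ∂(Measure.pi fun _ : Fin (k + 1) => μ))
      ≤ ℓ / (Nat.factorial (k + 1)) * (∫ s in Set.Ioo (0 : ℝ) ℓ, (ℓ - s) ∂μ) ^ (k + 1) := by
  set h : ℝ → ℝ := (Set.Ioo 0 ℓ).indicator fun t => ℓ - t
  have hh_nonneg : 0 ≤ h := Set.indicator_nonneg fun _ ht => sub_nonneg.2 ht.2.le
  have hh_int : Integrable h μ :=
    ((continuous_const.sub continuous_id).integrableOn_Icc.mono_set Set.Ioo_subset_Icc_self
      ).integrable_indicator measurableSet_Ioo
  set G : (Fin (k + 1) → ℝ) → ℝ := fun s => ∏ i, h (s i)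
  calc _ ≤ ∫ s, ℓ * {s | StrictAnti s}.indicator G s ∂(Measure.pi fun _ : Fin (k + 1) => μ) :=
        integral_mono_of_nonneg (.of_forall <| Set.indicator_nonneg fun _ hs =>
            hs.1.antitone.prod_gaps_nonneg hs.2.1.le hs.2.2.le)
          (((Integrable.fintype_prod fun _ => hh_int).indicator
            measurableSet_strictAnti).const_mul ℓ)
          (.of_forall (indicator_prod_gaps_le hℓ.le))
    _ = ℓ * ∫ s in {s | StrictAnti s}, G s ∂(Measure.pi fun _ : Fin (k + 1) => μ) := by
        rw [integral_const_mul, integral_indicator measurableSet_strictAnti]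
    _ ≤ ℓ * ((∫ t, h t ∂μ) ^ (k + 1) / (k + 1)!) := by
        gcongr
        rw [le_div_iff₀ (by positivity), mul_comm]
        exact factorial_mul_setIntegral_strictAnti_prod_le μ hh_nonneg hh_int
    _ = _ := by rw [integral_indicator measurableSet_Ioo]; ring

/-- bound on the ordered iterated integral ψ_j(ℓ) (here j = k+1 ≥ 1):
ψ_j(ℓ) ≤ (ℓ/j!)·(∫_{(0,ℓ)} (ℓ-s) dm(s))^j. -/
theorem stmt_5 (ℓ : ℝ) (hℓ : 0 < ℓ) (μ : Measure ℝ) [IsFiniteMeasure μ]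
    (hsupp : μ (Set.Icc (0 : ℝ) ℓ)ᶜ = 0) (k : ℕ) :
    (∫ s : Fin (k + 1) → ℝ,
        Set.indicator
          {s : Fin (k + 1) → ℝ | StrictAnti s ∧ 0 < s (Fin.last k) ∧ s 0 < ℓ}
          (fun s => (ℓ - s 0) * (∏ i : Fin k, (s i.castSucc - s i.succ)) * s (Fin.last k)) s
        ∂(Measure.pi fun _ : Fin (k + 1) => μ))
      ≤ ℓ / (Nat.factorial (k + 1)) * (∫ s in Set.Ioo (0 : ℝ) ℓ, (ℓ - s) ∂μ) ^ (k + 1) :=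
  stmt_5_general ℓ hℓ μ k
end

section
/- Let m: ℝ → [0,∞) be a nondecreasing càdlàg function with m = 0 on (-∞,0), support of dm having infimum 0 and supremum ℓ < ∞. A continuous function F on [0,ℓ] with F(0)=F(ℓ)=0 satisfies the eigenvalue equation F(x) = b·x - λ∫_0^x dy ∫_{[0,y)} F(z) dm(z) for some constant b if and only if F(x) = λ∫_{[0,ℓ)} G_{0,ℓ}(x,y)F(y) dm(y) for all x ∈ [0,ℓ], where G_{0,ℓ}(x,y) = y(ℓ-x)/ℓ for y ≤ x and x(ℓ-y)/ℓ for x ≤ y. -/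
/-!
Swapping the order of integration (Fubini for `dy × dm`) turns the iterated integral
`∫₀^x ∫_{[0,y)} F dm dy` into `K x := ∫_{[0,x)} (x - z) F(z) dm(z)`, and the Green function splits as
`G_{0,ℓ}(x, y) = x (ℓ - y) / ℓ - (x - y)⁺`, so that `∫_{[0,ℓ)} G_{0,ℓ}(x, ·) F dm = x K(ℓ) / ℓ - K(x)`.
Both equations are therefore affine in `x` up to the common term `-λ K(x)`, and the boundary
condition `F(ℓ) = 0` forces the slope `b = λ K(ℓ) / ℓ`.
-/

open MeasureTheory Set

theorem intervalIntegral_setIntegral_Ico_eq (μ : Measure ℝ) [SFinite μ] {G : ℝ → ℝ} {a x : ℝ}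
    (hax : a ≤ x) (hG : IntegrableOn G (Ico a x) μ) :
    ∫ y in a..x, ∫ z in Ico a y, G z ∂μ = ∫ z in Ico a x, (x - z) * G z ∂μ := by
  set f : ℝ → ℝ → ℝ := fun y z => if z < y then G z else 0
  have hf : Integrable (Function.uncurry f)
      ((volume.restrict (Ioc a x)).prod (μ.restrict (Ico a x))) := by
    have : Function.uncurry f = {p : ℝ × ℝ | p.2 < p.1}.indicator fun p => G p.2 := by
      ext ⟨y, z⟩; simp [f, indicator_apply]
    rw [this]
    exact (hG.comp_snd _).indicator (measurableSet_lt measurable_snd measurable_fst)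
  have inner_z : ∀ y ∈ Ioc a x, ∫ z in Ico a y, G z ∂μ = ∫ z in Ico a x, f y z ∂μ := by
    intro y hy
    have : (fun z => f y z) = (Iio y).indicator G := by
      ext z; simp [f, indicator_apply]
    rw [this, setIntegral_indicator measurableSet_Iio, Ico_inter_Iio, min_eq_right hy.2]
  have inner_y : ∀ z ∈ Ico a x, ∫ y in Ioc a x, f y z = (x - z) * G z := by
    intro z hz
    have : (fun y => f y z) = (Ioi z).indicator fun _ => G z := by
      ext y; simp [f, indicator_apply]
    rw [this, setIntegral_indicator measurableSet_Ioi, Ioc_inter_Ioi, max_eq_right hz.1,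
      setIntegral_const, Real.volume_real_Ioc_of_le hz.2.le, smul_eq_mul]
  calc ∫ y in a..x, ∫ z in Ico a y, G z ∂μ
      = ∫ y in Ioc a x, ∫ z in Ico a x, f y z ∂μ := by
        rw [intervalIntegral.integral_of_le hax]
        exact setIntegral_congr_fun measurableSet_Ioc inner_z
    _ = ∫ z in Ico a x, (∫ y in Ioc a x, f y z) ∂μ := integral_integral_swap hf
    _ = ∫ z in Ico a x, (x - z) * G z ∂μ := setIntegral_congr_fun measurableSet_Ico inner_y

noncomputable def dirichletGreen (ℓ x y : ℝ) : ℝ :=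
  if y ≤ x then y * (ℓ - x) / ℓ else x * (ℓ - y) / ℓ

theorem dirichletGreen_eq_sub_indicator {ℓ : ℝ} (hℓ : ℓ ≠ 0) (x y : ℝ) :
    dirichletGreen ℓ x y = x * (ℓ - y) / ℓ - (Iio x).indicator (fun y => x - y) y := by
  rcases lt_trichotomy y x with hyx | rfl | hxy
  · rw [dirichletGreen, if_pos hyx.le, indicator_of_mem (mem_Iio.2 hyx)]
    field_simp
    ring
  · simp [dirichletGreen]
  · rw [dirichletGreen, if_neg hxy.not_ge, indicator_of_notMem (notMem_Iio.2 hxy.le), sub_zero]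

theorem setIntegral_dirichletGreen_mul (μ : Measure ℝ) {ℓ x : ℝ} {F : ℝ → ℝ} (hℓ : ℓ ≠ 0)
    (hx : x ≤ ℓ) (hF : IntegrableOn F (Icc 0 ℓ) μ) :
    ∫ y in Ico 0 ℓ, dirichletGreen ℓ x y * F y ∂μ =
      x / ℓ * ∫ y in Ico 0 ℓ, (ℓ - y) * F y ∂μ - ∫ y in Ico 0 x, (x - y) * F y ∂μ := by
  have weighted : ∀ c, IntegrableOn (fun y => (c - y) * F y) (Ico 0 ℓ) μ := fun c =>
    (hF.continuousOn_mul (by fun_prop) isCompact_Icc).mono_set Ico_subset_Icc_self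
  have split : ∀ y, dirichletGreen ℓ x y * F y =
      x / ℓ * ((ℓ - y) * F y) - (Iio x).indicator (fun y => (x - y) * F y) y := by
    intro y
    rw [dirichletGreen_eq_sub_indicator hℓ, sub_mul, ← indicator_mul_left]
    ring
  simp_rw [split]
  rw [integral_sub ((weighted ℓ).const_mul _) ((weighted x).indicator measurableSet_Iio),
    integral_const_mul, setIntegral_indicator measurableSet_Iio, Ico_inter_Iio, min_eq_right hx]

theorem stmt_7_general (m : StieltjesFunction ℝ)
    (ℓ : ℝ) (hℓ : 0 < ℓ)
    (lam : ℝ) (F : ℝ → ℝ) (hF : ContinuousOn F (Set.Icc 0 ℓ))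
    (hFl : F ℓ = 0) :
    (∃ b : ℝ, ∀ x ∈ Set.Icc (0 : ℝ) ℓ,
        F x = b * x - lam * ∫ y in (0 : ℝ)..x, (∫ z in Set.Ico (0 : ℝ) y, F z ∂m.measure)) ↔
      (∀ x ∈ Set.Icc (0 : ℝ) ℓ,
        F x = lam * ∫ y in Set.Ico (0 : ℝ) ℓ,
          (if y ≤ x then y * (ℓ - x) / ℓ else x * (ℓ - y) / ℓ) * F y ∂m.measure) := by
  have hFint : IntegrableOn F (Icc 0 ℓ) m.measure := hF.integrableOn_compact isCompact_Icc
  set K : ℝ → ℝ := fun x => ∫ z in Ico 0 x, (x - z) * F z ∂m.measure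
  have hiter : ∀ x ∈ Icc 0 ℓ, ∫ y in (0 : ℝ)..x, (∫ z in Ico 0 y, F z ∂m.measure) = K x :=
    fun x hx => intervalIntegral_setIntegral_Ico_eq _ hx.1
      (hFint.mono_set (Ico_subset_Icc_self.trans (Icc_subset_Icc_right hx.2)))
  have hgreen : ∀ x ∈ Icc 0 ℓ, ∫ y in Ico 0 ℓ,
      (if y ≤ x then y * (ℓ - x) / ℓ else x * (ℓ - y) / ℓ) * F y ∂m.measure = x / ℓ * K ℓ - K x :=
    fun x hx => setIntegral_dirichletGreen_mul _ hℓ.ne' hx.2 hFint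
  constructor
  · rintro ⟨b, hb⟩ x hx
    have hslope := hb ℓ ⟨hℓ.le, le_rfl⟩
    rw [hFl, hiter ℓ ⟨hℓ.le, le_rfl⟩] at hslope
    have hb' : b = lam * K ℓ / ℓ := by
      field_simp
      linarith
    rw [hb x hx, hiter x hx, hgreen x hx, hb']
    ring
  · intro hg
    refine ⟨lam * K ℓ / ℓ, fun x hx => ?_⟩
    rw [hiter x hx, hg x hx, hgreen x hx]
    ring

/-- for the generalized operator -D_m D_x with Dirichlet conditions, a continuous
F on [0,ℓ] with F(0)=F(ℓ)=0 satisfies F(x) = b·x - λ∫₀^x ∫_{[0,y)} F dm dy for some b iff it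
satisfies the Green-function equation F(x) = λ∫_{[0,ℓ)} G_{0,ℓ}(x,y) F(y) dm(y). -/
theorem stmt_7 (m : StieltjesFunction ℝ) (hm0 : ∀ x < (0 : ℝ), m x = 0)
    (ℓ : ℝ) (hℓ : 0 < ℓ) [IsFiniteMeasure m.measure]
    (hsupp_top : m.measure (Set.Ioi ℓ) = 0)
    (hinf : ∀ ε > (0 : ℝ), 0 < m.measure (Set.Ioo 0 ε))
    (hsup : ∀ ε > (0 : ℝ), 0 < m.measure (Set.Ioo (ℓ - ε) ℓ))
    (lam : ℝ) (F : ℝ → ℝ) (hF : ContinuousOn F (Set.Icc 0 ℓ))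
    (hF0 : F 0 = 0) (hFl : F ℓ = 0) :
    (∃ b : ℝ, ∀ x ∈ Set.Icc (0 : ℝ) ℓ,
        F x = b * x - lam * ∫ y in (0 : ℝ)..x, (∫ z in Set.Ico (0 : ℝ) y, F z ∂m.measure)) ↔
      (∀ x ∈ Set.Icc (0 : ℝ) ℓ,
        F x = lam * ∫ y in Set.Ico (0 : ℝ) ℓ,
          (if y ≤ x then y * (ℓ - x) / ℓ else x * (ℓ - y) / ℓ) * F y ∂m.measure) :=
  stmt_7_general m ℓ hℓ lam F hF hFl
end

section
/- Symmetrized energy identity: let dm be a finite nonnegative measure supported in [0,ℓ], and let g, ĝ ∈ L²(dm) satisfy ∫ g dm = ∫ ĝ dm = 0. Define f(x) = a - ∫_0^x dy ∫_{[0,y)} g(z) dm(z) and f̂(x) = â - ∫_0^x dy ∫_{[0,y)} ĝ(z) dm(z). Then ∫_0^ℓ f'(x) f̂'(x) dx = -(1/2) ∫∫ g(z)ĝ(u) |z-u| dm(z) dm(u). -/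
/-!
By Fubini, `∫₀^ℓ (∫_{[0,x)} g dm) (∫_{[0,x)} ĝ dm) dx = ∫∫ g(z) ĝ(u) (ℓ - max(z,u)) dm dm`,
the inner `dx`-integral being the length of `(max(z,u), ℓ]`. Write
`max(z,u) = (z + u + |z - u|)/2`: each of the terms `ℓ`, `z`, `u` leaves a factor `∫ g dm` or
`∫ ĝ dm` after integrating, and these vanish, so only `-(1/2) |z - u|` survives.
-/

open MeasureTheory Set

section Fubini
variable {X Y : Type*} [MeasurableSpace X] [MeasurableSpace Y] {ν : Measure X} {μ : Measure Y}

theorem integral_setIntegral_mul_setIntegral [IsFiniteMeasure ν] [SFinite μ]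
    {s : X → Set Y} (hs : MeasurableSet {q : X × Y | q.2 ∈ s q.1})
    {g h : Y → ℝ} (hg : Integrable g μ) (hh : Integrable h μ) :
    ∫ x, (∫ z in s x, g z ∂μ) * (∫ u in s x, h u ∂μ) ∂ν
      = ∫ p, g p.1 * h p.2 * ν.real {x | p.1 ∈ s x ∧ p.2 ∈ s x} ∂(μ.prod μ) := by
  have hs_fiber (x : X) : MeasurableSet (s x) := measurable_prodMk_left hs
  have hs_param (z : Y) : MeasurableSet {x | z ∈ s x} := measurable_prodMk_right hs
  set F : X → Y × Y → ℝ := fun x p =>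
    {p : Y × Y | p.1 ∈ s x ∧ p.2 ∈ s x}.indicator (fun p => g p.1 * h p.2) p with hF
  have hF_int : Integrable (Function.uncurry F) (ν.prod (μ.prod μ)) := by
    have hT : MeasurableSet {q : X × Y × Y | q.2.1 ∈ s q.1 ∧ q.2.2 ∈ s q.1} :=
      ((measurable_fst.prodMk (measurable_fst.comp measurable_snd)) hs).inter
        ((measurable_fst.prodMk (measurable_snd.comp measurable_snd)) hs)
    exact (((integrable_const (1 : ℝ)).mul_prod (hg.mul_prod hh)).congr
      (.of_forall fun q => one_mul _)).indicator hT
  have h_outer (x : X) :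
      (∫ z in s x, g z ∂μ) * (∫ u in s x, h u ∂μ) = ∫ p, F x p ∂(μ.prod μ) := by
    rw [← integral_indicator (hs_fiber x), ← integral_indicator (hs_fiber x),
      ← integral_prod_mul]
    congr 1 with p
    by_cases h1 : p.1 ∈ s x <;> by_cases h2 : p.2 ∈ s x <;> simp [hF, h1, h2]
  have h_inner (p : Y × Y) :
      ∫ x, F x p ∂ν = g p.1 * h p.2 * ν.real {x | p.1 ∈ s x ∧ p.2 ∈ s x} := by
    have hp : MeasurableSet {x | p.1 ∈ s x ∧ p.2 ∈ s x} := (hs_param p.1).inter (hs_param p.2)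
    exact (integral_indicator_const _ hp).trans (mul_comm _ _)
  simp_rw [h_outer, integral_integral_swap hF_int, h_inner]

end Fubini

section Energy
variable {μ : Measure ℝ} {g h : ℝ → ℝ}

theorem integrable_mul_mul_abs_sub (hg : Integrable g μ) (hh : Integrable h μ)
    (hxg : Integrable (fun z => z * g z) μ) (hxh : Integrable (fun u => u * h u) μ) :
    Integrable (fun p : ℝ × ℝ => g p.1 * h p.2 * |p.1 - p.2|) (μ.prod μ) := by
  refine ((hxg.mul_prod hh).norm.add (hg.mul_prod hxh).norm).mono'
    ((hg.mul_prod hh).aestronglyMeasurable.mul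
      (continuous_fst.sub continuous_snd).abs.aestronglyMeasurable)
    (.of_forall fun p => ?_)
  simp only [Pi.add_apply, norm_mul, Real.norm_eq_abs, abs_abs]
  nlinarith [mul_le_mul_of_nonneg_left (abs_sub p.1 p.2)
    (mul_nonneg (abs_nonneg (g p.1)) (abs_nonneg (h p.2)))]

theorem integral_mul_mul_sub_max [SFinite μ] (c : ℝ) (hg : Integrable g μ) (hh : Integrable h μ)
    (hxg : Integrable (fun z => z * g z) μ) (hxh : Integrable (fun u => u * h u) μ)
    (hg₀ : ∫ z, g z ∂μ = 0) (hh₀ : ∫ u, h u ∂μ = 0) :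
    ∫ p, g p.1 * h p.2 * (c - max p.1 p.2) ∂(μ.prod μ)
      = -(1 / 2) * ∫ p, g p.1 * h p.2 * |p.1 - p.2| ∂(μ.prod μ) := by
  have h_split (p : ℝ × ℝ) : g p.1 * h p.2 * (c - max p.1 p.2)
      = (c * (g p.1 * h p.2) - 1 / 2 * (p.1 * g p.1 * h p.2) - 1 / 2 * (g p.1 * (p.2 * h p.2)))
        - 1 / 2 * (g p.1 * h p.2 * |p.1 - p.2|) := by
    have : max p.1 p.2 = (p.1 + p.2 + |p.1 - p.2|) / 2 := by
      linarith [min_add_max p.1 p.2, max_sub_min_eq_abs' p.1 p.2]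
    rw [this]; ring
  have hA : Integrable (fun p : ℝ × ℝ => c * (g p.1 * h p.2)) (μ.prod μ) :=
    (hg.mul_prod hh).const_mul c
  have hB : Integrable (fun p : ℝ × ℝ => 1 / 2 * (p.1 * g p.1 * h p.2)) (μ.prod μ) :=
    (hxg.mul_prod hh).const_mul _
  have hC : Integrable (fun p : ℝ × ℝ => 1 / 2 * (g p.1 * (p.2 * h p.2))) (μ.prod μ) :=
    (hg.mul_prod hxh).const_mul _
  have hAB : Integrable (fun p : ℝ × ℝ => c * (g p.1 * h p.2) - 1 / 2 * (p.1 * g p.1 * h p.2))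
      (μ.prod μ) := hA.sub hB
  have hABC : Integrable (fun p : ℝ × ℝ => c * (g p.1 * h p.2) - 1 / 2 * (p.1 * g p.1 * h p.2)
      - 1 / 2 * (g p.1 * (p.2 * h p.2))) (μ.prod μ) := hAB.sub hC
  have h_moments : ∫ p, c * (g p.1 * h p.2) - 1 / 2 * (p.1 * g p.1 * h p.2)
      - 1 / 2 * (g p.1 * (p.2 * h p.2)) ∂(μ.prod μ) = 0 := by
    rw [integral_sub hAB hC, integral_sub hA hB, integral_const_mul, integral_const_mul,
      integral_const_mul, integral_prod_mul g h, integral_prod_mul (fun z => z * g z) h,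
      integral_prod_mul g (fun u => u * h u), hg₀, hh₀]
    simp
  simp_rw [h_split]
  rw [integral_sub hABC ((integrable_mul_mul_abs_sub hg hh hxg hxh).const_mul _), h_moments,
    integral_const_mul, zero_sub, neg_mul]

end Energy

theorem volume_real_restrict_Ioc_setOf_mem_Ico {a b z u : ℝ} (hz : z ∈ Icc a b)
    (hu : u ∈ Icc a b) :
    (volume.restrict (Ioc a b)).real {x | z ∈ Ico a x ∧ u ∈ Ico a x} = b - max z u := by
  have h_set : {x | z ∈ Ico a x ∧ u ∈ Ico a x} = Ioi (max z u) := by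
    ext x
    simp [hz.1, hu.1]
  rw [h_set, measureReal_restrict_apply measurableSet_Ioi, inter_comm, Ioc_inter_Ioi,
    max_eq_right (le_max_of_le_left hz.1), Real.volume_real_Ioc,
    max_eq_left (sub_nonneg.2 (max_le hz.2 hu.2))]

/-- symmetrized energy identity. For g, h ∈ L²(dm) of dm-mean zero (dm a finite
measure supported in [0,ℓ]) and f, f̂ with derivatives f'(x) = -∫_{[0,x)} g dm,
f̂'(x) = -∫_{[0,x)} h dm, one has ∫₀^ℓ f' f̂' dx = -(1/2)∫∫ g(z)h(u)|z-u| dm(z)dm(u). -/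
theorem stmt_13 (ℓ : ℝ) (hℓ : 0 < ℓ) (μ : Measure ℝ) [IsFiniteMeasure μ]
    (hsupp : μ (Set.Icc (0 : ℝ) ℓ)ᶜ = 0)
    (g h : ℝ → ℝ) (hg : MemLp g 2 μ) (hh : MemLp h 2 μ)
    (hgmean : ∫ z, g z ∂μ = 0) (hhmean : ∫ z, h z ∂μ = 0) :
    (∫ x in (0 : ℝ)..ℓ,
        (-(∫ z in Set.Ico (0 : ℝ) x, g z ∂μ)) * (-(∫ z in Set.Ico (0 : ℝ) x, h z ∂μ)))
      = -(1 / 2) * ∫ z, (∫ u, g z * h u * |z - u| ∂μ) ∂μ := by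
  have hg₁ : Integrable g μ := hg.integrable one_le_two
  have hh₁ : Integrable h μ := hh.integrable one_le_two
  have hμ : ∀ᵐ z ∂μ, z ∈ Icc 0 ℓ := (measure_eq_zero_iff_ae_notMem.1 hsupp).mono fun _ => not_not.1
  have hμμ : ∀ᵐ p ∂μ.prod μ, p.1 ∈ Icc 0 ℓ ∧ p.2 ∈ Icc 0 ℓ :=
    (Measure.quasiMeasurePreserving_fst.ae hμ).and (Measure.quasiMeasurePreserving_snd.ae hμ)
  have h_moment {f : ℝ → ℝ} (hf : Integrable f μ) : Integrable (fun z => z * f z) μ :=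
    hf.bdd_mul (c := ℓ) measurable_id.aestronglyMeasurable
      (hμ.mono fun z hz => abs_le.2 ⟨by linarith [hz.1], hz.2⟩)
  have hIco : MeasurableSet {q : ℝ × ℝ | q.2 ∈ Ico 0 q.1} :=
    (measurableSet_le measurable_const measurable_snd).inter
      (measurableSet_lt measurable_snd measurable_fst)
  rw [intervalIntegral.integral_of_le hℓ.le,
    integral_integral (integrable_mul_mul_abs_sub hg₁ hh₁ (h_moment hg₁) (h_moment hh₁)),
    ← integral_mul_mul_sub_max ℓ hg₁ hh₁ (h_moment hg₁) (h_moment hh₁) hgmean hhmean]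
  simp_rw [neg_mul_neg]
  rw [integral_setIntegral_mul_setIntegral hIco hg₁ hh₁]
  refine integral_congr_ae ?_
  filter_upwards [hμμ] with p hp
  rw [volume_real_restrict_Ioc_setOf_mem_Ico hp.1 hp.2]
end
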